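/- arXiv:2003.01495 — 5 statements merged into one kernel-verified Lean document; each statement's English description precedes it below -/
import Mathlib

section
/- The family F = {D_c : c ∈ ℤ/7ℤ} ∪ {D'_c : c ∈ ℤ/7ℤ} is an eternal domination family for the infinite strong grid G∞ (this is the content of the statement that the Alternating strategy eternally dominates P∞ ⊠ P∞). -/
/-- The infinite strong grid on `ℤ × ℤ`: distinct vertices are adjacent iff both
coordinates differ by at most 1. -/
def strongGridInf : SimpleGraph (ℤ × ℤ) where
  Adj p q := p ≠ q ∧ |p.1 - q.1| ≤ 1 ∧ |p.2 - q.2| ≤ 1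
  symm := by
    constructor
    intro p q h
    exact ⟨h.1.symm, by rw [abs_sub_comm]; exact h.2.1, by rw [abs_sub_comm]; exact h.2.2⟩
  loopless := by
    constructor
    intro p h
    exact h.1 rfl

/-- `S` is a dominating set of `G`: every vertex is in `S` or adjacent to a vertex of `S`. -/
def IsDomSet {V : Type*} (G : SimpleGraph V) (S : Set V) : Prop :=
  ∀ v : V, v ∈ S ∨ ∃ u ∈ S, G.Adj v u

/-- `F` is an eternal domination family for `G`. -/
def IsEternalDomFamily {V : Type*} (G : SimpleGraph V) (F : Set (Set V)) : Prop :=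
  F.Nonempty ∧ (∀ C ∈ F, IsDomSet G C) ∧
    ∀ C ∈ F, ∀ v : V, ∃ C' ∈ F, v ∈ C' ∧
      ∃ φ : C ≃ C', ∀ u : C, (φ u : V) = (u : V) ∨ G.Adj (u : V) (φ u : V)

/-- The configuration `D_c = {(i,j) : 3i + j ≡ c (mod 7)}`. -/
def Dset (c : ZMod 7) : Set (ℤ × ℤ) := {p | ((3 * p.1 + p.2 : ℤ) : ZMod 7) = c}

/-- The configuration `D'_c = {(i,j) : i + 2j ≡ c (mod 7)}`. -/
def D'set (c : ZMod 7) : Set (ℤ × ℤ) := {p | ((p.1 + 2 * p.2 : ℤ) : ZMod 7) = c}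

/-!
`Dset c` and `D'set c` are the fibres of the linear forms `3i + j` and `i + 2j` on `ℤ × ℤ`
modulo 7, and the seven displacements `(0,0), (0,±1), (±1,±1)` form a common transversal of
both forms. So every vertex reaches any fibre in at most one step, and when a vertex `v` is
attacked, moving every guard by the unique such step onto the fibre of the *other* form through
`v` is a bijection of configurations.
-/

open Set Function

section TransversalMoves

variable {V Z : Type*} [AddCommGroup V] [AddCommGroup Z] {G : SimpleGraph V} {T : Set V}

theorem isDomSet_preimage_singleton (hG : ∀ p, ∀ t ∈ T, t ≠ 0 → G.Adj p (p + t))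
    {L : V →+ Z} (hL : SurjOn L T univ) (c : Z) : IsDomSet G (L ⁻¹' {c}) := by
  intro v
  obtain ⟨t, ht, hLt⟩ := hL (mem_univ (c - L v))
  have hvt : v + t ∈ L ⁻¹' {c} := by simp [hLt]
  by_cases h0 : t = 0
  · exact Or.inl (by simpa [h0] using hvt)
  · exact Or.inr ⟨v + t, hvt, hG v t ht h0⟩

/-- Each guard moves by the element of `T` that lands it on the fibre `L' = c'`; since `L` is
injective on `T`, that displacement is recovered from the value of `L` at the new position. -/
theorem exists_equiv_preimage_singleton (hG : ∀ p, ∀ t ∈ T, t ≠ 0 → G.Adj p (p + t))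
    {L L' : V →+ Z} (hL : BijOn L T univ) (hL' : BijOn L' T univ) (c c' : Z) :
    ∃ φ : L ⁻¹' {c} ≃ L' ⁻¹' {c'}, ∀ u, (φ u : V) = u ∨ G.Adj u (φ u) := by
  have hσ := hL.invOn_invFunOn
  have hσ' := hL'.invOn_invFunOn
  have hσT : ∀ z, invFunOn L T z ∈ T := fun z => hL.surjOn.mapsTo_invFunOn (mem_univ z)
  have hσ'T : ∀ z, invFunOn L' T z ∈ T := fun z => hL'.surjOn.mapsTo_invFunOn (mem_univ z)
  let φ : L ⁻¹' {c} ≃ L' ⁻¹' {c'} :=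
    { toFun p := ⟨p + invFunOn L' T (c' - L' p), by simp [hσ'.2 (mem_univ _)]⟩
      invFun q := ⟨q - invFunOn L T (L q - c), by simp [hσ.2 (mem_univ _)]⟩
      left_inv p := by
        obtain ⟨p, hp⟩ := p
        rw [mem_preimage, mem_singleton_iff] at hp
        ext
        simp [hp, hσ.1 (hσ'T _)]
      right_inv q := by
        obtain ⟨q, hq⟩ := q
        rw [mem_preimage, mem_singleton_iff] at hq
        ext
        simp [hq, hσ'.1 (hσT _)] }
  refine ⟨φ, fun u => ?_⟩
  by_cases h0 : invFunOn L' T (c' - L' u) = 0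
  · exact Or.inl (by simp [φ, h0])
  · exact Or.inr (hG u _ (hσ'T _) h0)

theorem isEternalDomFamily_range_preimage_union (hG : ∀ p, ∀ t ∈ T, t ≠ 0 → G.Adj p (p + t))
    {L L' : V →+ Z} (hL : BijOn L T univ) (hL' : BijOn L' T univ) :
    IsEternalDomFamily G (range (fun c => L ⁻¹' {c}) ∪ range (fun c => L' ⁻¹' {c})) := by
  refine ⟨⟨_, Or.inl ⟨0, rfl⟩⟩, ?_, ?_⟩
  · rintro C (⟨c, rfl⟩ | ⟨c, rfl⟩)
    exacts [isDomSet_preimage_singleton hG hL.surjOn c,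
      isDomSet_preimage_singleton hG hL'.surjOn c]
  · rintro C (⟨c, rfl⟩ | ⟨c, rfl⟩) v
    · exact ⟨_, Or.inr ⟨L' v, rfl⟩, rfl, exists_equiv_preimage_singleton hG hL hL' c (L' v)⟩
    · exact ⟨_, Or.inl ⟨L v, rfl⟩, rfl, exists_equiv_preimage_singleton hG hL' hL c (L v)⟩

end TransversalMoves

theorem strongGridInf_adj_add {p d : ℤ × ℤ} (hd : d ≠ 0) (h₁ : |d.1| ≤ 1) (h₂ : |d.2| ≤ 1) :
    strongGridInf.Adj p (p + d) := by
  refine ⟨by simpa using hd, ?_, ?_⟩ <;> simpa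

def formD : ℤ × ℤ →+ ZMod 7 where
  toFun p := ((3 * p.1 + p.2 : ℤ) : ZMod 7)
  map_zero' := by simp
  map_add' p q := by simp only [Prod.fst_add, Prod.snd_add]; push_cast; ring

def formD' : ℤ × ℤ →+ ZMod 7 where
  toFun p := ((p.1 + 2 * p.2 : ℤ) : ZMod 7)
  map_zero' := by simp
  map_add' p q := by simp only [Prod.fst_add, Prod.snd_add]; push_cast; ring

def alternatingMoves : Finset (ℤ × ℤ) :=
  {(0, 0), (0, 1), (0, -1), (1, 1), (1, -1), (-1, 1), (-1, -1)}

theorem abs_le_one_of_mem_alternatingMoves :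
    ∀ d ∈ alternatingMoves, |d.1| ≤ 1 ∧ |d.2| ≤ 1 := by decide

theorem bijOn_formD : BijOn formD alternatingMoves univ := by
  refine ⟨mapsTo_univ _ _, ?_, ?_⟩ <;>
    simp only [InjOn, SurjOn, subset_def, mem_image, Finset.mem_coe, mem_univ, true_implies] <;>
    decide

theorem bijOn_formD' : BijOn formD' alternatingMoves univ := by
  refine ⟨mapsTo_univ _ _, ?_, ?_⟩ <;>
    simp only [InjOn, SurjOn, subset_def, mem_image, Finset.mem_coe, mem_univ, true_implies] <;>
    decide

theorem strongGridInf_adj_add_of_mem_alternatingMoves (p : ℤ × ℤ) :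
    ∀ d ∈ (alternatingMoves : Set (ℤ × ℤ)), d ≠ 0 → strongGridInf.Adj p (p + d) := by
  intro d hd hd0
  obtain ⟨h₁, h₂⟩ := abs_le_one_of_mem_alternatingMoves d hd
  exact strongGridInf_adj_add hd0 h₁ h₂

/-- The Alternating strategy eternally dominates the infinite strong grid: the family
`{D_c : c ∈ ℤ/7ℤ} ∪ {D'_c : c ∈ ℤ/7ℤ}` is an eternal domination family for `G∞`. -/
theorem alternating_strategy_eternally_dominates_infinite_strong_grid :
    IsEternalDomFamily strongGridInf (Set.range Dset ∪ Set.range D'set) :=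
  isEternalDomFamily_range_preimage_union strongGridInf_adj_add_of_mem_alternatingMoves
    bijOn_formD bijOn_formD'
end

section
/- For every c ∈ ℤ/7ℤ and every vertex v = (x,y) ∈ ℤ × ℤ, setting c' = 3x + y (mod 7) (so that v ∈ D_{c'}), there exists a bijection φ : D'_c → D_{c'} such that for every u ∈ D'_c, either φ(u) = u or φ(u) is adjacent to u in the infinite strong grid G∞. In other words, from any configuration D'_c the guards can move, each staying in place or moving to an adjacent vertex, into a configuration D_{c'} containing the attacked vertex v. -/
theorem bijOn_preimage_add_correction {A G H : Type*} [AddCommGroup A] [AddCommGroup G]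
    [AddCommGroup H] (f : A →+ G) (g : A →+ H) (δ : G → A) (hfδ : ∀ s, f (δ s) = s)
    (hgδ : Function.Bijective (g ∘ δ)) (c : H) (c' : G) :
    Set.BijOn (fun p => p + δ (c' - f p)) (g ⁻¹' {c}) (f ⁻¹' {c'}) := by
  refine ⟨fun p _ => ?_,
    fun p hp q hq (hpq : p + δ (c' - f p) = q + δ (c' - f q)) => ?_, fun q hq => ?_⟩
  · change f (p + δ (c' - f p)) = c'
    rw [map_add, hfδ, add_sub_cancel]
  · have hgδ_eq : (g ∘ δ) (c' - f p) = (g ∘ δ) (c' - f q) := by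
      have := congrArg g hpq
      rw [map_add, map_add, hp, hq] at this
      exact add_left_cancel this
    rw [hgδ.1 hgδ_eq] at hpq
    exact add_right_cancel hpq
  · obtain ⟨s, hs⟩ := hgδ.2 (g q - c)
    have hq' : f q = c' := hq
    have hdefect : c' - f (q - δ s) = s := by rw [map_sub, hfδ, hq', sub_sub_cancel]
    refine ⟨q - δ s, ?_, ?_⟩
    · change g (q - δ s) = c
      rw [map_sub, ← Function.comp_apply (f := g), hs, sub_sub_cancel]
    · simp only [hdefect, sub_add_cancel]

lemma strongGridInf_eq_or_adj_add {d : ℤ × ℤ} (h₁ : |d.1| ≤ 1) (h₂ : |d.2| ≤ 1) (p : ℤ × ℤ) :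
    p + d = p ∨ strongGridInf.Adj p (p + d) := by
  by_cases hd : d = 0
  · simp [hd]
  · right
    refine ⟨fun h => hd ?_, ?_, ?_⟩ <;> simp_all

/-- `Dset c` and `D'set c` are definitionally the fibres `dVal ⁻¹' {c}` and `d'Val ⁻¹' {c}`. -/
def dVal : ℤ × ℤ →+ ZMod 7 :=
  AddMonoidHom.mk' (fun p => ((3 * p.1 + p.2 : ℤ) : ZMod 7)) fun a b => by
    simp only [Prod.fst_add, Prod.snd_add]; push_cast; ring

def d'Val : ℤ × ℤ →+ ZMod 7 :=
  AddMonoidHom.mk' (fun p => ((p.1 + 2 * p.2 : ℤ) : ZMod 7)) fun a b => by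
    simp only [Prod.fst_add, Prod.snd_add]; push_cast; ring

/-- The residues 3 and 4 are each realised by two king steps; the choice `(-1,-1)`, `(1,1)`
makes `d'Val ∘ kingStep` a permutation. -/
def kingStep : ZMod 7 → ℤ × ℤ :=
  ![(0, 0), (0, 1), (1, -1), (-1, -1), (1, 1), (-1, 1), (0, -1)]

lemma dVal_kingStep : ∀ s, dVal (kingStep s) = s := by decide

lemma bijective_d'Val_comp_kingStep : Function.Bijective (d'Val ∘ kingStep) := by decide

lemma abs_kingStep_le : ∀ s, |(kingStep s).1| ≤ 1 ∧ |(kingStep s).2| ≤ 1 := by decide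

/-- From any configuration `D'_c`, after an attack at `v = (x,y)` the guards can move —
each staying in place or moving to an adjacent vertex — into the configuration
`D_{c'}` with `c' = 3x + y (mod 7)`, which contains the attacked vertex. -/
theorem move_D'set_to_Dset (c : ZMod 7) (x y : ℤ) :
    (x, y) ∈ Dset ((3 * x + y : ℤ) : ZMod 7) ∧
      ∃ φ : (D'set c) ≃ (Dset ((3 * x + y : ℤ) : ZMod 7)),
        ∀ u : D'set c, (φ u : ℤ × ℤ) = (u : ℤ × ℤ) ∨
          strongGridInf.Adj (u : ℤ × ℤ) (φ u : ℤ × ℤ) := by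
  set c' : ZMod 7 := ((3 * x + y : ℤ) : ZMod 7)
  have hmove : Set.BijOn (fun p => p + kingStep (c' - dVal p)) (D'set c) (Dset c') :=
    bijOn_preimage_add_correction dVal d'Val kingStep dVal_kingStep
      bijective_d'Val_comp_kingStep c c'
  refine ⟨rfl, hmove.equiv _, fun u => ?_⟩
  obtain ⟨h₁, h₂⟩ := abs_kingStep_le (c' - dVal u)
  exact strongGridInf_eq_or_adj_add h₁ h₂ u
end

section
/- (Attack at (i,j−1), Table 1.) Let c ∈ ℤ/7ℤ and let (i,j) ∈ ℤ × ℤ satisfy 3i + j ≡ c (mod 7), and set c' = i + 2(j−1) (mod 7). Then: (a) the seven points (i,j), (i+1,j−3), (i+3,j−2), (i+5,j−1), (i+4,j+2), (i+2,j+1), (i−1,j+3) all lie in D_c and, together with all their translates by vectors (7a,7b) with a,b ∈ ℤ, they exhaust D_c, each element of D_c arising exactly once; (b) the map φ that sends, for all a,b ∈ ℤ, (i,j)+(7a,7b) ↦ (i,j−1)+(7a,7b), (i+1,j−3)+(7a,7b) ↦ (i+2,j−2)+(7a,7b), (i+3,j−2)+(7a,7b) ↦ (i+4,j−3)+(7a,7b),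 (i+5,j−1)+(7a,7b) ↦ (i+5,j)+(7a,7b), (i+4,j+2)+(7a,7b) ↦ (i+3,j+1)+(7a,7b), (i+2,j+1)+(7a,7b) ↦ (i+1,j+2)+(7a,7b), and fixes every translate (i−1,j+3)+(7a,7b) (the anchors), is a well-defined bijection from D_c onto D'_{c'}; (c) every u ∈ D_c satisfies φ(u) = u or φ(u) adjacent to u in G∞; in particular the attacked vertex (i,j−1) ∈ D'_{c'} is occupied after the move. -/
open Function Set

section Lattice

variable {n : ℕ} {ι : Type*}

def residueMod (n : ℕ) : ℤ × ℤ →+ ZMod n × ZMod n :=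
  (Int.castAddHom (ZMod n)).prodMap (Int.castAddHom (ZMod n))

@[simp]
lemma residueMod_apply (u : ℤ × ℤ) : residueMod n u = ((u.1 : ZMod n), (u.2 : ZMod n)) := rfl

lemma residueMod_eq_residueMod_iff {u v : ℤ × ℤ} :
    residueMod n u = residueMod n v ↔ ∃ a b : ℤ, u = v + ((n : ℤ) * a, (n : ℤ) * b) := by
  simp only [residueMod_apply, Prod.mk.injEq, ZMod.intCast_eq_intCast_iff_dvd_sub]
  constructor
  · rintro ⟨⟨a, ha⟩, ⟨b, hb⟩⟩
    exact ⟨-a, -b, Prod.ext (by simp; linarith) (by simp; linarith)⟩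
  · rintro ⟨a, b, rfl⟩
    exact ⟨⟨-a, by simp⟩, ⟨-b, by simp⟩⟩

def latticeTranslate (n : ℕ) (pts : ι → ℤ × ℤ) (q : ι × ℤ × ℤ) : ℤ × ℤ :=
  pts q.1 + ((n : ℤ) * q.2.1, (n : ℤ) * q.2.2)

lemma residueMod_latticeTranslate (pts : ι → ℤ × ℤ) (q : ι × ℤ × ℤ) :
    residueMod n (latticeTranslate n pts q) = residueMod n (pts q.1) :=
  residueMod_eq_residueMod_iff.2 ⟨_, _, rfl⟩

lemma mem_range_latticeTranslate_iff {pts : ι → ℤ × ℤ} {u : ℤ × ℤ} :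
    u ∈ range (latticeTranslate n pts) ↔ ∃ k, residueMod n (pts k) = residueMod n u := by
  constructor
  · rintro ⟨q, rfl⟩
    exact ⟨q.1, (residueMod_latticeTranslate pts q).symm⟩
  · rintro ⟨k, hk⟩
    obtain ⟨a, b, rfl⟩ := residueMod_eq_residueMod_iff.1 hk.symm
    exact ⟨(k, a, b), rfl⟩

lemma latticeTranslate_injective [NeZero n] {pts : ι → ℤ × ℤ}
    (h : Injective (residueMod n ∘ pts)) : Injective (latticeTranslate n pts) := by
  rintro ⟨k, a, b⟩ ⟨k', a', b'⟩ hq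
  have hk := congrArg (residueMod n) hq
  rw [residueMod_latticeTranslate, residueMod_latticeTranslate] at hk
  obtain rfl : k = k' := h hk
  have hn : (n : ℤ) ≠ 0 := Int.natCast_ne_zero.2 (NeZero.ne n)
  have hab := add_left_cancel hq
  simp only [Prod.mk.injEq, mul_right_inj' hn] at hab
  rw [hab.1, hab.2]

lemma mem_range_latticeTranslate_iff_of_residueMod_eq {pts : ι → ℤ × ℤ}
    {base : ZMod n × ZMod n} {off : ι → ZMod n × ZMod n}
    (h : ∀ k, residueMod n (pts k) = base + off k) {u : ℤ × ℤ} :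
    u ∈ range (latticeTranslate n pts) ↔ ∃ k, off k = residueMod n u - base := by
  simp only [mem_range_latticeTranslate_iff, h, eq_sub_iff_add_eq']

lemma latticeTranslate_injective_of_residueMod_eq [NeZero n] {pts : ι → ℤ × ℤ}
    {base : ZMod n × ZMod n} {off : ι → ZMod n × ZMod n}
    (h : ∀ k, residueMod n (pts k) = base + off k) (hoff : Injective off) :
    Injective (latticeTranslate n pts) :=
  latticeTranslate_injective fun k k' hk =>
    hoff (add_left_cancel ((h k).symm.trans (hk.trans (h k'))))

end Lattice

lemma Function.Injective.bijOn_extend_range {α β Q : Type*} {P : Q → α} {T : Q → β}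
    (hP : Injective P) (hT : Injective T) (e' : α → β) :
    BijOn (extend P T e') (range P) (range T) := by
  refine ⟨?_, ?_, ?_⟩
  · rintro _ ⟨q, rfl⟩
    exact ⟨q, (hP.extend_apply T e' q).symm⟩
  · rintro _ ⟨q, rfl⟩ _ ⟨q', rfl⟩ h
    rw [hP.extend_apply, hP.extend_apply] at h
    rw [hT h]
  · rintro _ ⟨q, rfl⟩
    exact ⟨P q, ⟨q, rfl⟩, hP.extend_apply T e' q⟩

lemma strongGridInf_adj_add_add_iff (v u w : ℤ × ℤ) :
    strongGridInf.Adj (v + u) (v + w) ↔ strongGridInf.Adj u w := by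
  simp [strongGridInf]

lemma eq_or_strongGridInf_adj_add {d : ℤ × ℤ} (hd : d = 0 ∨ strongGridInf.Adj 0 d)
    (u : ℤ × ℤ) :
    u + d = u ∨ strongGridInf.Adj u (u + d) := by
  rcases hd with rfl | hd
  · exact Or.inl (add_zero u)
  · exact Or.inr (by simpa using (strongGridInf_adj_add_add_iff u 0 d).2 hd)

section AttackLeft

variable (i j : ℤ)

def guards : Fin 7 → ℤ × ℤ :=
  ![(i, j), (i + 1, j - 3), (i + 3, j - 2), (i + 5, j - 1), (i + 4, j + 2), (i + 2, j + 1),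
    (i - 1, j + 3)]

def targets : Fin 7 → ℤ × ℤ :=
  ![(i, j - 1), (i + 2, j - 2), (i + 4, j - 3), (i + 5, j), (i + 3, j + 1), (i + 1, j + 2),
    (i - 1, j + 3)]

def guardMoves : Fin 7 → ℤ × ℤ := ![(0, -1), (1, 1), (1, -1), (0, 1), (-1, -1), (-1, 1), (0, 0)]

def guardResidues : Fin 7 → ZMod 7 × ZMod 7 :=
  ![(0, 0), (1, -3), (3, -2), (5, -1), (4, 2), (2, 1), (-1, 3)]

def targetResidues : Fin 7 → ZMod 7 × ZMod 7 :=
  ![(0, 0), (2, -1), (4, -2), (5, 1), (3, 2), (1, 3), (-1, 4)]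

lemma targets_eq_guards_add_guardMoves (k : Fin 7) :
    targets i j k = guards i j k + guardMoves k := by
  fin_cases k <;> ext <;> simp [targets, guards, guardMoves] <;> ring

lemma guardMoves_eq_zero_or_adj (k : Fin 7) :
    guardMoves k = 0 ∨ strongGridInf.Adj 0 (guardMoves k) := by
  fin_cases k <;> simp [guardMoves, strongGridInf, Prod.ext_iff]

lemma residueMod_guards (k : Fin 7) :
    residueMod 7 (guards i j k) = residueMod 7 (i, j) + guardResidues k := by
  fin_cases k <;> ext <;> simp [guards, guardResidues] <;> ring

lemma residueMod_targets (k : Fin 7) :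
    residueMod 7 (targets i j k) = residueMod 7 (i, j - 1) + targetResidues k := by
  fin_cases k <;> ext <;> simp [targets, targetResidues] <;> ring

lemma guardResidues_injective : Injective guardResidues := by decide

lemma targetResidues_injective : Injective targetResidues := by decide

lemma exists_guardResidues_eq_iff (y : ZMod 7 × ZMod 7) :
    (∃ k, guardResidues k = y) ↔ 3 * y.1 + y.2 = 0 := by
  revert y; decide

lemma exists_targetResidues_eq_iff (y : ZMod 7 × ZMod 7) :
    (∃ k, targetResidues k = y) ↔ y.1 + 2 * y.2 = 0 := by
  revert y; decide

variable {i j}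

lemma Dset_eq_range_latticeTranslate_guards {c : ZMod 7}
    (hij : ((3 * i + j : ℤ) : ZMod 7) = c) :
    Dset c = range (latticeTranslate 7 (guards i j)) := by
  ext u
  rw [mem_range_latticeTranslate_iff_of_residueMod_eq (residueMod_guards i j),
    exists_guardResidues_eq_iff, Dset, mem_ofPred_eq, ← hij]
  simp only [residueMod_apply, Prod.fst_sub, Prod.snd_sub]
  push_cast
  constructor <;> intro h <;> linear_combination h

variable (i j)

lemma D'set_eq_range_latticeTranslate_targets :
    D'set ((i + 2 * (j - 1) : ℤ) : ZMod 7) = range (latticeTranslate 7 (targets i j)) := by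
  ext u
  rw [mem_range_latticeTranslate_iff_of_residueMod_eq (residueMod_targets i j),
    exists_targetResidues_eq_iff, D'set, mem_ofPred_eq]
  simp only [residueMod_apply, Prod.fst_sub, Prod.snd_sub]
  push_cast
  constructor <;> intro h <;> linear_combination h

end AttackLeft

/-- Table 1, attack at `(i, j−1)`: the seven listed guards (the last being the anchor) and their
translates by `(7a,7b)` tile `D_c` exactly; the indicated moves define a bijection
`f : D_c → D'_{c'}` with `c' = i + 2 * (j - 1) (mod 7)`, each guard staying in place or moving to an
adjacent vertex, and the attacked vertex `(i, j−1)` lies in `D'_{c'}`, hence is occupied. -/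
theorem attack_left (c : ZMod 7) (i j : ℤ)
    (hij : ((3 * i + j : ℤ) : ZMod 7) = c)
    (pts tgt : Fin 7 → ℤ × ℤ)
    (hpts : pts = ![(i, j), (i + 1, j - 3), (i + 3, j - 2), (i + 5, j - 1), (i + 4, j + 2), (i + 2, j + 1), (i - 1, j + 3)])
    (htgt : tgt = ![(i, j - 1), (i + 2, j - 2), (i + 4, j - 3), (i + 5, j), (i + 3, j + 1), (i + 1, j + 2), (i - 1, j + 3)]) :
    (∀ k : Fin 7, pts k ∈ Dset c) ∧
    (∀ u ∈ Dset c, ∃! q : Fin 7 × ℤ × ℤ, u = pts q.1 + (7 * q.2.1, 7 * q.2.2)) ∧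
    ∃ f : ℤ × ℤ → ℤ × ℤ,
      (∀ k : Fin 7, ∀ a b : ℤ, f (pts k + (7 * a, 7 * b)) = tgt k + (7 * a, 7 * b)) ∧
      Set.BijOn f (Dset c) (D'set ((i + 2 * (j - 1) : ℤ) : ZMod 7)) ∧
      (∀ u ∈ Dset c, f u = u ∨ strongGridInf.Adj u (f u)) ∧
      ((i, j - 1)) ∈ D'set ((i + 2 * (j - 1) : ℤ) : ZMod 7) := by
  obtain rfl : pts = guards i j := hpts
  obtain rfl : tgt = targets i j := htgt
  set P := latticeTranslate 7 (guards i j)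
  set T := latticeTranslate 7 (targets i j)
  have hP : Injective P :=
    latticeTranslate_injective_of_residueMod_eq (residueMod_guards i j) guardResidues_injective
  have hT : Injective T :=
    latticeTranslate_injective_of_residueMod_eq (residueMod_targets i j) targetResidues_injective
  have hbij := hP.bijOn_extend_range hT id
  rw [← D'set_eq_range_latticeTranslate_targets] at hbij
  rw [Dset_eq_range_latticeTranslate_guards hij]
  refine ⟨fun k => ⟨(k, 0, 0), by simp [latticeTranslate]⟩, ?_, extend P T id,
    fun k a b => hP.extend_apply T id (k, a, b), hbij, ?_, rfl⟩
  · rintro _ ⟨q, rfl⟩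
    exact ⟨q, rfl, fun q' h => hP h.symm⟩
  · rintro _ ⟨⟨k, a, b⟩, rfl⟩
    have hmove : T (k, a, b) = P (k, a, b) + guardMoves k := by
      simp only [T, P, latticeTranslate, targets_eq_guards_add_guardMoves, add_right_comm]
    rw [hP.extend_apply, hmove]
    exact eq_or_strongGridInf_adj_add (guardMoves_eq_zero_or_adj k) _
end

section
/- (Attack at (i+1,j+1), Table 1.) Let c ∈ ℤ/7ℤ and let (i,j) ∈ ℤ × ℤ satisfy 3i + j ≡ c (mod 7), and set c' = (i+1) + 2(j+1) (mod 7). Then: (a) the seven points (i,j), (i+2,j+1), (i+4,j+2), (i+3,j+5), (i+1,j+4), (i−1,j+3), (i−2,j−1) all lie in D_c and, together with all their translates by vectors (7a,7b) with a,b ∈ ℤ, they exhaust D_c, each element of D_c arising exactly once; (b) the map φ that sends, for all a,b ∈ ℤ, (i,j)+(7a,7b) ↦ (i+1,j+1)+(7a,7b), (i+2,j+1)+(7a,7b) ↦ (i+3,j)+(7a,7b), (i+4,j+2)+(7a,7b) ↦ (i+4,j+3)+(7a,7b), (i+3,j+5)+(7a,7b) ↦ (i+2,j+4)+(7a,7b),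 (i+1,j+4)+(7a,7b) ↦ (i,j+5)+(7a,7b), (i−1,j+3)+(7a,7b) ↦ (i−1,j+2)+(7a,7b), and fixes every translate (i−2,j−1)+(7a,7b) (the anchors), is a well-defined bijection from D_c onto D'_{c'}; (c) every u ∈ D_c satisfies φ(u) = u or φ(u) adjacent to u in G∞; in particular the attacked vertex (i+1,j+1) ∈ D'_{c'} is occupied after the move. -/
/-! On `D_c` a point is determined modulo `7ℤ²` by the residue of its first coordinate, and
the guard at `u` moves by a vector `δ (u mod 7)` depending only on that residue. A map
`u ↦ u + δ (u mod 7)` is a bijection between two periodic sets as soon as its reduction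
`x ↦ x + δ x` on `(ℤ/7)²` is a bijection between their reductions. After translating `(i, j)` to
the origin, this, the tiling of `D_c` by the seven guards and the adjacency of every move are
finite checks over `ℤ/7`. -/

theorem Set.BijOn.add_comp_sub {A B : Type*} [AddCommGroup A] [AddGroup B] {π : A →+ B}
    {δ : B → A} {S T : Set B} (h : Set.BijOn (fun x => x + π (δ x)) S T) (p : A) :
    Set.BijOn (fun u => u + δ (π (u - p))) {u | π (u - p) ∈ S} {u | π (u - p) ∈ T} := by
  have hπ (u : A) : π (u + δ (π (u - p)) - p) = π (u - p) + π (δ (π (u - p))) := by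
    rw [add_sub_right_comm, map_add]
  refine ⟨fun u hu => ?_, fun u hu v hv huv => ?_, fun v hv => ?_⟩
  · simpa only [Set.mem_ofPred_eq, hπ] using h.mapsTo hu
  · have hred : π (u - p) = π (v - p) := h.injOn hu hv <| by
      simpa only [hπ] using congrArg (fun w => π (w - p)) huv
    simpa only [hred, add_left_inj] using huv
  · obtain ⟨x, hx, hFx⟩ := h.surjOn hv
    have hred : π (v - δ x - p) = x := by
      rw [sub_right_comm, map_sub, ← hFx, add_sub_cancel_right]
    exact ⟨v - δ x, by simpa only [Set.mem_ofPred_eq, hred],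
      by simp only [hred, sub_add_cancel]⟩

theorem strongGridInf_adj_add_iff (u d : ℤ × ℤ) :
    strongGridInf.Adj u (u + d) ↔ d ≠ 0 ∧ |d.1| ≤ 1 ∧ |d.2| ≤ 1 := by
  simp [strongGridInf, Prod.fst_add, Prod.snd_add]

def reduceMod (n : ℕ) : ℤ × ℤ →+ ZMod n × ZMod n :=
  (Int.castAddHom (ZMod n)).prodMap (Int.castAddHom (ZMod n))

theorem reduceMod_eq_zero_iff {n : ℕ} {u : ℤ × ℤ} :
    reduceMod n u = 0 ↔ ∃ a b : ℤ, u = (n * a, n * b) := by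
  simp [reduceMod, Prod.ext_iff, ZMod.intCast_zmod_eq_zero_iff_dvd, Dvd.dvd]

theorem reduceMod_add_natCast_mul (n : ℕ) (u : ℤ × ℤ) (a b : ℤ) :
    reduceMod n (u + (n * a, n * b)) = reduceMod n u := by
  rw [map_add, reduceMod_eq_zero_iff.2 ⟨a, b, rfl⟩, add_zero]

theorem existsUnique_eq_add_of_bijOn_reduceMod {n : ℕ} [NeZero n] {ι : Type*}
    {r : ι → ℤ × ℤ} {S : Set (ZMod n × ZMod n)} (hr : Set.BijOn (reduceMod n ∘ r) Set.univ S) {u : ℤ × ℤ}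
    (hu : reduceMod n u ∈ S) : ∃! q : ι × ℤ × ℤ, u = r q.1 + (n * q.2.1, n * q.2.2) := by
  obtain ⟨k, -, hk⟩ := hr.surjOn hu
  have hdiff : reduceMod n (u - r k) = 0 := by rw [map_sub, ← hk, Function.comp_apply, sub_self]
  obtain ⟨a, b, hab⟩ := reduceMod_eq_zero_iff.1 hdiff
  refine ⟨(k, a, b), (add_eq_of_eq_sub' hab.symm).symm, ?_⟩
  rintro ⟨k', a', b'⟩ (hq : u = r k' + (n * a', n * b'))
  have hk' : k' = k := hr.injOn trivial trivial <| by
    rw [hk, Function.comp_apply, hq, reduceMod_add_natCast_mul]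
  subst hk'
  have hn : (n : ℤ) ≠ 0 := Nat.cast_ne_zero.2 (NeZero.ne n)
  simp only [hq, add_sub_cancel_left, Prod.mk.injEq, mul_right_inj' hn] at hab
  rw [hab.1, hab.2]

def diagUpGuards : Fin 7 → ℤ × ℤ :=
  ![(0, 0), (2, 1), (4, 2), (3, 5), (1, 4), (-1, 3), (-2, -1)]

def diagUpTargets : Fin 7 → ℤ × ℤ :=
  ![(1, 1), (3, 0), (4, 3), (2, 4), (0, 5), (-1, 2), (-2, -1)]

def diagUpMove (x : ZMod 7 × ZMod 7) : ℤ × ℤ :=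
  ![(1, 1), (-1, 1), (1, -1), (-1, -1), (0, 1), (0, 0), (0, -1)] x.1

theorem Dset_eq_setOf_reduceMod_sub (i j : ℤ) :
    Dset ((3 * i + j : ℤ) : ZMod 7) =
      {u | reduceMod 7 (u - (i, j)) ∈ {x | 3 * x.1 + x.2 = 0}} := by
  ext u
  change _ = _ ↔ 3 * ((u.1 - i : ℤ) : ZMod 7) + ((u.2 - j : ℤ) : ZMod 7) = 0
  rw [← sub_eq_zero]
  push_cast
  ring_nf

theorem D'set_eq_setOf_reduceMod_sub (i j : ℤ) :
    D'set (((i + 1) + 2 * (j + 1) : ℤ) : ZMod 7) =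
      {u | reduceMod 7 (u - (i, j)) ∈ {x | x.1 + 2 * x.2 = 3}} := by
  ext u
  change _ = _ ↔ ((u.1 - i : ℤ) : ZMod 7) + 2 * ((u.2 - j : ℤ) : ZMod 7) = 3
  rw [← sub_eq_zero, ← sub_eq_zero (b := (3 : ZMod 7))]
  push_cast
  ring_nf

theorem bijOn_reduceMod_diagUpGuards :
    Set.BijOn (reduceMod 7 ∘ diagUpGuards) Set.univ {x | 3 * x.1 + x.2 = 0} := by
  simp only [Set.BijOn, Set.MapsTo, Set.InjOn, Set.SurjOn, Set.subset_def, Set.mem_image,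
    Set.mem_univ, Set.mem_ofPred_eq, true_and, forall_const]
  decide

theorem diagUpMove_reduceMod_diagUpGuards (k : Fin 7) :
    diagUpMove (reduceMod 7 (diagUpGuards k)) = diagUpTargets k - diagUpGuards k := by
  revert k
  decide

theorem bijOn_add_reduceMod_diagUpMove :
    Set.BijOn (fun x => x + reduceMod 7 (diagUpMove x)) {x | 3 * x.1 + x.2 = 0}
      {x | x.1 + 2 * x.2 = 3} := by
  simp only [Set.BijOn, Set.MapsTo, Set.InjOn, Set.SurjOn, Set.subset_def, Set.mem_image,
    Set.mem_ofPred_eq]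
  decide

theorem add_diagUpMove_eq_self_or_adj (u : ℤ × ℤ) (x : ZMod 7 × ZMod 7) :
    u + diagUpMove x = u ∨ strongGridInf.Adj u (u + diagUpMove x) := by
  rw [add_eq_left, strongGridInf_adj_add_iff]
  revert x
  decide

/-- Table 1, attack at `(i+1, j+1)`: the seven listed guards (the last being the anchor) and their
translates by `(7a,7b)` tile `D_c` exactly; the indicated moves define a bijection
`f : D_c → D'_{c'}` with `c' = (i + 1) + 2 * (j + 1) (mod 7)`, each guard staying in place or moving to an
adjacent vertex, and the attacked vertex `(i+1, j+1)` lies in `D'_{c'}`, hence is occupied. -/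
theorem attack_diag_up (c : ZMod 7) (i j : ℤ)
    (hij : ((3 * i + j : ℤ) : ZMod 7) = c)
    (pts tgt : Fin 7 → ℤ × ℤ)
    (hpts : pts = ![(i, j), (i + 2, j + 1), (i + 4, j + 2), (i + 3, j + 5), (i + 1, j + 4), (i - 1, j + 3), (i - 2, j - 1)])
    (htgt : tgt = ![(i + 1, j + 1), (i + 3, j), (i + 4, j + 3), (i + 2, j + 4), (i, j + 5), (i - 1, j + 2), (i - 2, j - 1)]) :
    (∀ k : Fin 7, pts k ∈ Dset c) ∧
    (∀ u ∈ Dset c, ∃! q : Fin 7 × ℤ × ℤ, u = pts q.1 + (7 * q.2.1, 7 * q.2.2)) ∧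
    ∃ f : ℤ × ℤ → ℤ × ℤ,
      (∀ k : Fin 7, ∀ a b : ℤ, f (pts k + (7 * a, 7 * b)) = tgt k + (7 * a, 7 * b)) ∧
      Set.BijOn f (Dset c) (D'set (((i + 1) + 2 * (j + 1) : ℤ) : ZMod 7)) ∧
      (∀ u ∈ Dset c, f u = u ∨ strongGridInf.Adj u (f u)) ∧
      ((i + 1, j + 1)) ∈ D'set (((i + 1) + 2 * (j + 1) : ℤ) : ZMod 7) := by
  have hpts' : pts = fun k => (i, j) + diagUpGuards k := by
    subst hpts; funext k; fin_cases k <;> ext <;> simp [diagUpGuards] <;> ring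
  have htgt' : tgt = fun k => (i, j) + diagUpTargets k := by
    subst htgt; funext k; fin_cases k <;> ext <;> simp [diagUpTargets] <;> ring
  subst hij hpts' htgt'
  refine ⟨fun k => ?_, fun u hu => ?_, fun u => u + diagUpMove (reduceMod 7 (u - (i, j))),
    fun k a b => ?_, ?_, fun u _ => add_diagUpMove_eq_self_or_adj u _, rfl⟩
  · rw [Dset_eq_setOf_reduceMod_sub]
    simpa using bijOn_reduceMod_diagUpGuards.mapsTo (Set.mem_univ k)
  · rw [Dset_eq_setOf_reduceMod_sub] at hu
    simpa [sub_eq_iff_eq_add', add_assoc] using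
      existsUnique_eq_add_of_bijOn_reduceMod bijOn_reduceMod_diagUpGuards hu
  · have h7 := reduceMod_add_natCast_mul 7 (diagUpGuards k) a b
    rw [Nat.cast_ofNat] at h7
    simp only [add_assoc (i, j), add_sub_cancel_left, h7, diagUpMove_reduceMod_diagUpGuards]
    abel
  · rw [Dset_eq_setOf_reduceMod_sub, D'set_eq_setOf_reduceMod_sub]
    exact bijOn_add_reduceMod_diagUpMove.add_comp_sub (i, j)
end

section
/- For every integer n ≥ 1, there exists an eternal domination family for the strong grid P₂ ⊠ Pₙ (two rows of n vertices) all of whose members have cardinality ⌈n/2⌉; in particular γ∞_all(P₂ ⊠ Pₙ) ≤ ⌈n/2⌉. (One guard assigned to each 2×2 block {2k,2k+1} × {0,1} of the partition of the two rows into disjoint copies of K₄, plus one guard for a final 2×1 block when n is odd, suffices.) -/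
/-- The strong grid `Pₙ ⊠ Pₘ` on vertex set `{0,…,n−1} × {0,…,m−1}`: distinct vertices
are adjacent iff both coordinates differ by at most 1. -/
def strongGrid (n m : ℕ) : SimpleGraph (Fin n × Fin m) where
  Adj p q := p ≠ q ∧ |(p.1 : ℤ) - (q.1 : ℤ)| ≤ 1 ∧ |(p.2 : ℤ) - (q.2 : ℤ)| ≤ 1
  symm := by
    refine ⟨?_⟩
    intro p q h
    exact ⟨h.1.symm, by rw [abs_sub_comm]; exact h.2.1, by rw [abs_sub_comm]; exact h.2.2⟩
  loopless := by
    refine ⟨?_⟩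
    intro p h
    exact h.1 rfl

/-!
Partition the vertices into cliques (here the 2×2 blocks `{0,1} × {2k, 2k+1}`, the last one
possibly 2×1) and keep exactly one guard in each clique. Such a transversal dominates, since
every vertex is in or adjacent to the guard of its own clique, and any transversal can be
reached from any other in a single move, each guard stepping to the new guard of its clique.
-/

open Function

section Transversals

variable {V ι : Type*}

/-- The sets meeting every fibre of `blk` in exactly one point. -/
def transversals (blk : V → ι) : Set (Set V) :=
  {S | ∃ f : ι → V, RightInverse f blk ∧ Set.range f = S}

variable {blk : V → ι} {f g : ι → V}

lemma apply_blk_eq_of_mem_range (hf : RightInverse f blk) {u : V}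
    (hu : u ∈ Set.range f) : f (blk u) = u := by
  obtain ⟨i, rfl⟩ := hu
  rw [hf i]

def transversalEquiv (hf : RightInverse f blk) (hg : RightInverse g blk) :
    Set.range f ≃ Set.range g where
  toFun u := ⟨g (blk u), Set.mem_range_self _⟩
  invFun w := ⟨f (blk w), Set.mem_range_self _⟩
  left_inv u := Subtype.ext <| by
    simp only [hg (blk u), apply_blk_eq_of_mem_range hf u.2]
  right_inv w := Subtype.ext <| by
    simp only [hf (blk w), apply_blk_eq_of_mem_range hg w.2]

lemma exists_rightInverse_apply_eq (hblk : Surjective blk) (v : V) :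
    ∃ g : ι → V, RightInverse g blk ∧ g (blk v) = v := by
  classical
  refine ⟨update (surjInv hblk) (blk v) v, fun i => ?_, update_self _ _ _⟩
  rcases eq_or_ne i (blk v) with rfl | hi
  · rw [update_self]
  · rw [update_of_ne hi, surjInv_eq hblk]

variable {G : SimpleGraph V}

lemma eq_or_adj_of_blk_eq (hclique : ∀ i, G.IsClique (blk ⁻¹' {i})) {u w : V}
    (h : blk u = blk w) : w = u ∨ G.Adj u w := by
  rcases eq_or_ne w u with rfl | hne
  · exact .inl rfl
  · exact .inr (hclique (blk w) h rfl hne.symm)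

lemma isDomSet_of_mem_transversals (hclique : ∀ i, G.IsClique (blk ⁻¹' {i})) {S : Set V}
    (hS : S ∈ transversals blk) : IsDomSet G S := by
  obtain ⟨f, hf, rfl⟩ := hS
  intro v
  rcases eq_or_adj_of_blk_eq hclique (hf (blk v)).symm with h | h
  · exact .inl ⟨blk v, h⟩
  · exact .inr ⟨f (blk v), Set.mem_range_self _, h⟩

theorem isEternalDomFamily_transversals (hblk : Surjective blk)
    (hclique : ∀ i, G.IsClique (blk ⁻¹' {i})) : IsEternalDomFamily G (transversals blk) := by
  refine ⟨⟨_, surjInv hblk, rightInverse_surjInv hblk, rfl⟩,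
    fun S hS => isDomSet_of_mem_transversals hclique hS, ?_⟩
  rintro _ ⟨f, hf, rfl⟩ v
  obtain ⟨g, hg, hgv⟩ := exists_rightInverse_apply_eq hblk v
  refine ⟨_, ⟨g, hg, rfl⟩, ⟨blk v, hgv⟩, transversalEquiv hf hg, fun u => ?_⟩
  exact eq_or_adj_of_blk_eq hclique (hg (blk u)).symm

lemma ncard_of_mem_transversals {S : Set V} (hS : S ∈ transversals blk) :
    S.ncard = Nat.card ι := by
  obtain ⟨f, hf, rfl⟩ := hS
  exact Set.ncard_range_of_injective hf.injective

end Transversals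

section StrongGrid

variable {n : ℕ}

def twoRowBlock (p : Fin 2 × Fin n) : Fin ((n + 1) / 2) :=
  ⟨p.2 / 2, by omega⟩

lemma twoRowBlock_surjective : Surjective (twoRowBlock (n := n)) := fun k =>
  ⟨(0, ⟨2 * k, by omega⟩), Fin.ext (by simp [twoRowBlock])⟩

lemma isClique_twoRowBlock_preimage (k : Fin ((n + 1) / 2)) :
    (strongGrid 2 n).IsClique (twoRowBlock ⁻¹' {k}) := by
  intro p hp q hq hne
  simp only [Set.mem_preimage, Set.mem_singleton_iff, twoRowBlock, Fin.ext_iff] at hp hq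
  have hrow₁ := p.1.isLt
  have hrow₂ := q.1.isLt
  refine ⟨hne, ?_, ?_⟩ <;> rw [abs_le] <;> constructor <;> omega

end StrongGrid

theorem eternal_domination_two_rows_general (n : ℕ) :
    ∃ F : Set (Set (Fin 2 × Fin n)), IsEternalDomFamily (strongGrid 2 n) F ∧
      ∀ C ∈ F, C.ncard = (n + 1) / 2 :=
  ⟨transversals twoRowBlock,
    isEternalDomFamily_transversals twoRowBlock_surjective isClique_twoRowBlock_preimage,
    fun _ hC => by rw [ncard_of_mem_transversals hC, Nat.card_fin]⟩

/-- For every `n ≥ 1`, the strong grid `P₂ ⊠ Pₙ` (two rows of `n` vertices) admits an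
eternal domination family all of whose members have cardinality `⌈n/2⌉`; in particular
`γ∞_all(P₂ ⊠ Pₙ) ≤ ⌈n/2⌉`. -/
theorem eternal_domination_two_rows (n : ℕ) (hn : 1 ≤ n) :
    ∃ F : Set (Set (Fin 2 × Fin n)), IsEternalDomFamily (strongGrid 2 n) F ∧
      ∀ C ∈ F, C.ncard = (n + 1) / 2 :=
  eternal_domination_two_rows_general n
end
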